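/- For every subset S of K one has co_Φ(S) = K ∩ (δ^Φ)^{-1}( cl-co^{w*}(δ^Φ(S)) ), where cl-co^{w*}(δ^Φ(S)) denotes the weak*-closed convex hull of δ^Φ(S) in K(Φ). -/

import Mathlib

open MeasureTheory Set

section Defs

variable {K : Type*} [TopologicalSpace K] [CompactSpace K]

/-- The canonical injection `δ^Φ : K → Φ*`, `δ^Φ(x)(φ) = φ(x)`. -/
noncomputable def deltaPhi (Φ : Submodule ℝ C(K, ℝ)) (x : K) : WeakDual ℝ ↥Φ :=
  (ContinuousMap.evalCLM ℝ x).comp Φ.subtypeL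

/-- The set `K(Φ) = {Q ∈ Φ* : ‖Q‖ = Q(𝟏) = 1}`. -/
noncomputable def KPhi (Φ : Submodule ℝ C(K, ℝ))
    (h1 : ContinuousMap.const K (1 : ℝ) ∈ Φ) : Set (WeakDual ℝ ↥Φ) :=
  {Q | @Norm.norm (StrongDual ℝ Φ) (@ContinuousLinearMap.hasOpNorm ℝ ℝ Φ ℝ _ _ _ _ _ _ (RingHom.id ℝ))
      (WeakDual.toStrongDual Q) = 1 ∧ Q ⟨ContinuousMap.const K (1 : ℝ), h1⟩ = 1}

end Defs

section DefsTC

variable {K : Type*} [TopologicalSpace K] [CompactSpace K]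

/-- A closed set `C ⊆ K` is convex-trace w.r.t. `Φ` if `δ^Φ(C) = δ^Φ(K) ∩ Ĉ` for some
weak*-closed convex subset `Ĉ` of `K(Φ)`. -/
def TraceConvexSet (Φ : Submodule ℝ C(K, ℝ)) (h1 : ContinuousMap.const K (1 : ℝ) ∈ Φ)
    (C : Set K) : Prop :=
  IsClosed C ∧ ∃ Ch : Set (WeakDual ℝ ↥Φ), Ch ⊆ KPhi Φ h1 ∧ IsClosed Ch ∧ Convex ℝ Ch ∧
    deltaPhi Φ '' C = deltaPhi Φ '' Set.univ ∩ Ch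

end DefsTC

section DefsHull

variable {K : Type*} [TopologicalSpace K] [CompactSpace K]

/-- The `Φ`-trace convexification of `S`: the intersection of all convex-trace subsets of `K`
containing `S`. -/
def traceCoHull (Φ : Submodule ℝ C(K, ℝ)) (h1 : ContinuousMap.const K (1 : ℝ) ∈ Φ)
    (S : Set K) : Set K :=
  ⋂₀ {C : Set K | TraceConvexSet Φ h1 C ∧ S ⊆ C}

end DefsHull

/-!
Since `Φ` separates points, `δ^Φ` is injective, so a convex-trace set `C` with witness `Ĉ` is
exactly `(δ^Φ)⁻¹(Ĉ)`. Conversely, `(δ^Φ)⁻¹(Ĉ)` is convex-trace for every weak*-closed convex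
`Ĉ ⊆ K(Φ)`. As `K(Φ)` is itself weak*-closed and convex and contains `δ^Φ(K)`, the closed convex
hull of `δ^Φ(S)` is such a `Ĉ`, and it is the smallest weak*-closed convex set containing `δ^Φ(S)`;
so its preimage is the smallest convex-trace set containing `S`.
-/

section TraceConvex

variable {K : Type*} [TopologicalSpace K] (Φ : Submodule ℝ C(K, ℝ))

lemma continuous_deltaPhi : Continuous (deltaPhi Φ) :=
  WeakDual.continuous_of_continuous_eval fun φ => map_continuous (φ : C(K, ℝ))

lemma deltaPhi_injective (hsep : ∀ x y : K, x ≠ y → ∃ φ ∈ Φ, φ x ≠ φ y) :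
    Function.Injective (deltaPhi Φ) := by
  intro x y hxy
  by_contra hne
  obtain ⟨φ, hφ, hne'⟩ := hsep x y hne
  exact hne' (DFunLike.congr_fun hxy ⟨φ, hφ⟩)

variable [CompactSpace K] (h1 : ContinuousMap.const K (1 : ℝ) ∈ Φ)

/-- The bound `‖Q‖ ≥ 1` is automatic from `1 = Q 𝟏 ≤ ‖Q‖ ‖𝟏‖ ≤ ‖Q‖`, so `K(Φ)` is cut out
by weak*-closed convex conditions. -/
lemma KPhi_eq_iInter_inter :
    KPhi Φ h1 = (⋂ φ : Φ, (fun Q : WeakDual ℝ Φ => Q φ) ⁻¹' Metric.closedBall 0 ‖φ‖) ∩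
      (fun Q : WeakDual ℝ Φ => Q ⟨ContinuousMap.const K 1, h1⟩) ⁻¹' {1} := by
  ext Q
  simp only [mem_inter_iff, mem_iInter, mem_preimage, mem_closedBall_zero_iff, mem_singleton_iff]
  have hle := ContinuousLinearMap.le_opNorm (𝕜 := ℝ) (σ₁₂ := RingHom.id ℝ) (E := Φ) (F := ℝ)
    (WeakDual.toStrongDual Q)
  have hbd := ContinuousLinearMap.opNorm_le_bound (𝕜 := ℝ) (σ₁₂ := RingHom.id ℝ) (E := Φ) (F := ℝ)
    (WeakDual.toStrongDual Q) zero_le_one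
  simp only [one_mul] at hbd
  refine ⟨fun ⟨hn, he⟩ => ⟨fun φ => (hle φ).trans_eq ?_, he⟩,
    fun ⟨hn, he⟩ => ⟨le_antisymm (hbd hn) ?_, he⟩⟩
  · -- `hn` is stated with the operator norm instance fixed in `KPhi`, hence `erw`
    erw [hn, one_mul]
    rfl
  have hone : ‖(⟨ContinuousMap.const K 1, h1⟩ : Φ)‖ ≤ 1 :=
    (ContinuousMap.norm_le _ zero_le_one).mpr fun _ => by simp
  calc (1 : ℝ) = ‖Q ⟨ContinuousMap.const K 1, h1⟩‖ := by rw [he, norm_one]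
    _ ≤ _ := hle _
    _ ≤ _ := mul_le_of_le_one_right (norm_nonneg _) hone

lemma isClosed_KPhi : IsClosed (KPhi Φ h1) := by
  rw [KPhi_eq_iInter_inter]
  exact (isClosed_iInter fun φ =>
    Metric.isClosed_closedBall.preimage (WeakDual.eval_continuous φ)).inter
      (isClosed_singleton.preimage (WeakDual.eval_continuous _))

lemma convex_KPhi : Convex ℝ (KPhi Φ h1) := by
  have hlin (φ : Φ) : IsLinearMap ℝ fun Q : WeakDual ℝ Φ => Q φ := ⟨fun _ _ => rfl, fun _ _ => rfl⟩
  rw [KPhi_eq_iInter_inter]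
  exact (convex_iInter fun φ => (convex_closedBall 0 ‖φ‖).is_linear_preimage (hlin φ)).inter
    ((convex_singleton 1).is_linear_preimage (hlin _))

lemma deltaPhi_mem_KPhi (x : K) : deltaPhi Φ x ∈ KPhi Φ h1 := by
  rw [KPhi_eq_iInter_inter]
  exact ⟨mem_iInter.mpr fun φ => mem_closedBall_zero_iff.mpr ((φ : C(K, ℝ)).norm_coe_le_norm x),
    rfl⟩

lemma traceConvexSet_preimage {Ch : Set (WeakDual ℝ Φ)} (hCh : Ch ⊆ KPhi Φ h1)
    (hcl : IsClosed Ch) (hconv : Convex ℝ Ch) : TraceConvexSet Φ h1 (deltaPhi Φ ⁻¹' Ch) :=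
  ⟨hcl.preimage (continuous_deltaPhi Φ), Ch, hCh, hcl, hconv, by
    rw [image_preimage_eq_inter_range, image_univ, inter_comm]⟩

lemma TraceConvexSet.exists_eq_preimage (hinj : Function.Injective (deltaPhi Φ)) {C : Set K}
    (hC : TraceConvexSet Φ h1 C) :
    ∃ Ch : Set (WeakDual ℝ Φ), IsClosed Ch ∧ Convex ℝ Ch ∧ C = deltaPhi Φ ⁻¹' Ch := by
  obtain ⟨-, Ch, -, hcl, hconv, himage⟩ := hC
  refine ⟨Ch, hcl, hconv, ?_⟩
  rw [← hinj.preimage_image C, himage, preimage_inter, image_univ, preimage_range, univ_inter]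

end TraceConvex

theorem stmt8_general {K : Type*} [TopologicalSpace K] [CompactSpace K]
    (Φ : Submodule ℝ C(K, ℝ))
    (hsep : ∀ x y : K, x ≠ y → ∃ φ ∈ Φ, φ x ≠ φ y)
    (hconst : ∀ c : ℝ, ContinuousMap.const K c ∈ Φ)
    (S : Set K) :
    traceCoHull Φ (hconst 1) S =
      deltaPhi Φ ⁻¹' closure (convexHull ℝ (deltaPhi Φ '' S)) := by
  rw [← closedConvexHull_eq_closure_convexHull (E := WeakDual ℝ Φ)]
  refine subset_antisymm (sInter_subset_of_mem ⟨?_, ?_⟩) (subset_sInter ?_)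
  · refine traceConvexSet_preimage Φ (hconst 1) ?_ isClosed_closedConvexHull
      convex_closedConvexHull
    exact closedConvexHull_min (image_subset_iff.mpr fun x _ => deltaPhi_mem_KPhi Φ (hconst 1) x)
      (convex_KPhi Φ (hconst 1)) (isClosed_KPhi Φ (hconst 1))
  · exact image_subset_iff.mp (subset_closedConvexHull ..)
  · rintro C ⟨hC, hSC⟩
    obtain ⟨Ch, hcl, hconv, rfl⟩ := hC.exists_eq_preimage Φ (hconst 1) (deltaPhi_injective Φ hsep)
    exact preimage_mono (closedConvexHull_min (image_subset_iff.mpr hSC) hconv hcl)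

/-- For every `S ⊆ K`:
`co_Φ(S) = K ∩ (δ^Φ)⁻¹(weak*-closed convex hull of δ^Φ(S))`. -/
theorem stmt8 {K : Type*} [TopologicalSpace K] [CompactSpace K] [T2Space K]
    (Φ : Submodule ℝ C(K, ℝ)) (hΦclosed : IsClosed (Φ : Set C(K, ℝ)))
    (hsep : ∀ x y : K, x ≠ y → ∃ φ ∈ Φ, φ x ≠ φ y)
    (hconst : ∀ c : ℝ, ContinuousMap.const K c ∈ Φ)
    (S : Set K) :
    traceCoHull Φ (hconst 1) S =
      deltaPhi Φ ⁻¹' closure (convexHull ℝ (deltaPhi Φ '' S)) :=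
  stmt8_general Φ hsep hconst S
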